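/- Let T be a finite tile set with symmetric weight functions w_H, w_V : T × T → ℤ, and let w be the minimum cost of a 2 × 2 square of tiles (the sum of the four internal adjacency weights, minimized over all quadruples (a,b,c,d) with a bottom-left, b bottom-right, c top-left, d top-right). Then for every even N, there exists a tiling of the N × N torus with total cost exactly N²·w/2, obtained by repeating a minimum-cost 2 × 2 square N/2 times in each direction; by the double-counting lower bound this is optimal. -/
import Mathlib

/-- Total cost of an `N × N` toroidal tiling (first index = row). -/
def torusCost {T : Type*} (wH wV : T → T → ℤ) (N : ℕ) [NeZero N]
    (f : ZMod N → ZMod N → T) : ℤ :=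
  (∑ i : ZMod N, ∑ j : ZMod N, wH (f i j) (f i (j + 1))) +
  (∑ i : ZMod N, ∑ j : ZMod N, wV (f i j) (f (i + 1) j))

private def sqCost {T : Type*} (wH wV : T → T → ℤ) (N : ℕ) [NeZero N]
    (g : ZMod N → ZMod N → T) (i j : ZMod N) : ℤ :=
  wH (g i j) (g i (j+1)) + wH (g (i+1) j) (g (i+1) (j+1)) +
  wV (g i j) (g (i+1) j) + wV (g i (j+1)) (g (i+1) (j+1))

private lemma double_eq {T : Type*} (wH wV : T → T → ℤ) (N : ℕ) [NeZero N]
    (g : ZMod N → ZMod N → T) :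
    2 * torusCost wH wV N g = ∑ i : ZMod N, ∑ j : ZMod N, sqCost wH wV N g i j := by
  have hH : (∑ i : ZMod N, ∑ j : ZMod N, wH (g (i+1) j) (g (i+1) (j+1)))
      = ∑ i : ZMod N, ∑ j : ZMod N, wH (g i j) (g i (j+1)) :=
    Fintype.sum_equiv (Equiv.addRight (1 : ZMod N))
      (fun i => ∑ j : ZMod N, wH (g (i+1) j) (g (i+1) (j+1)))
      (fun i => ∑ j : ZMod N, wH (g i j) (g i (j+1))) (fun i => rfl)
  have hV : ∀ i : ZMod N, (∑ j : ZMod N, wV (g i (j+1)) (g (i+1) (j+1)))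
      = ∑ j : ZMod N, wV (g i j) (g (i+1) j) := fun i =>
    Fintype.sum_equiv (Equiv.addRight (1 : ZMod N))
      (fun j => wV (g i (j+1)) (g (i+1) (j+1)))
      (fun j => wV (g i j) (g (i+1) j)) (fun j => rfl)
  simp only [sqCost, Finset.sum_add_distrib, hH, hV, torusCost]
  ring

private lemma parity_succ (N : ℕ) [NeZero N] (hN : Even N) (i : ZMod N) :
    Even (i + 1).val ↔ ¬ Even i.val := by
  have hN2 : 2 ≤ N := by
    rcases hN with ⟨k, hk⟩
    have : N ≠ 0 := NeZero.ne N
    omega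
  haveI : Fact (1 < N) := ⟨hN2⟩
  have h : (i + 1).val = (i.val + 1) % N := by
    rw [ZMod.val_add, ZMod.val_one]
  have hlt : i.val < N := ZMod.val_lt i
  have hmod : N % 2 = 0 := Nat.even_iff.mp hN
  rcases Nat.lt_or_ge (i.val + 1) N with h1 | h1
  · rw [h, Nat.mod_eq_of_lt h1]
    simp [Nat.even_iff]
    omega
  · have : i.val + 1 = N := by omega
    rw [h, this, Nat.mod_self]
    simp [Nat.even_iff]
    omega

/-- For symmetric weights and even `N`, repeating a minimum-cost `2 × 2`
square (`a` bottom-left, `b` bottom-right, `c` top-left, `d` top-right,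
achieving the minimum square cost `w`) in a checkerboard pattern gives a
toroidal tiling of total cost exactly `N²·w/2`, and this is optimal. -/
theorem repeat_min_square_optimal {T : Type*} [Fintype T] (wH wV : T → T → ℤ)
    (hH : ∀ x y : T, wH x y = wH y x) (hV : ∀ x y : T, wV x y = wV y x)
    (N : ℕ) [NeZero N] (hNeven : Even N) (w : ℤ)
    (hmin : ∀ p q r s : T, w ≤ wH p q + wH r s + wV p r + wV q s)
    (a b c d : T) (hach : wH a b + wH c d + wV a c + wV b d = w) :
    ∃ f : ZMod N → ZMod N → T,
      (f = fun i j =>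
        if Even i.val then (if Even j.val then a else b)
        else (if Even j.val then c else d)) ∧
      2 * torusCost wH wV N f = (N : ℤ) ^ 2 * w ∧
      ∀ g : ZMod N → ZMod N → T, torusCost wH wV N f ≤ torusCost wH wV N g := by
  set f : ZMod N → ZMod N → T := fun i j =>
        if Even i.val then (if Even j.val then a else b)
        else (if Even j.val then c else d) with hf
  have hconst : ∑ _i : ZMod N, ∑ _j : ZMod N, w = (N : ℤ) ^ 2 * w := by
    simp [Finset.sum_const, ZMod.card, Finset.card_univ]
    ring
  have hsq : ∀ i j : ZMod N, sqCost wH wV N f i j = w := by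
    intro i j
    have hpi := parity_succ N hNeven i
    have hpj := parity_succ N hNeven j
    by_cases hi : Even i.val <;> by_cases hj : Even j.val <;>
      simp [sqCost, hf, hi, hj, hpi, hpj] <;>
      linarith [hach, hH a b, hH c d, hV a c, hV b d]
  have hfeq : 2 * torusCost wH wV N f = (N : ℤ) ^ 2 * w := by
    rw [double_eq]
    rw [← hconst]
    exact Finset.sum_congr rfl fun i _ => Finset.sum_congr rfl fun j _ => hsq i j
  refine ⟨f, rfl, hfeq, fun g => ?_⟩
  have hge : (N : ℤ) ^ 2 * w ≤ 2 * torusCost wH wV N g := by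
    rw [double_eq, ← hconst]
    exact Finset.sum_le_sum fun i _ => Finset.sum_le_sum fun j _ =>
      hmin _ _ _ _
  linarith [hfeq, hge]
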